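/- Fix a unit vector n ∈ ℝ³ and define, for Q a symmetric traceless 3×3 matrix, H₊Q = 9(Q - (n⊗n)Q - Q(n⊗n) + (2/3)((n⊗n):Q)·I) + 6(n⊗n - I/3)·((n⊗n):Q). Then the kernel of H₊ on symmetric traceless matrices is exactly {n⊗v + v⊗n : v ∈ ℝ³, v·n = 0}. -/
import Mathlib


/-- The Frobenius pairing `A : B = Tr (A B)`. -/
noncomputable def frob (A B : Matrix (Fin 3) (Fin 3) ℝ) : ℝ := (A * B).trace

/-- The linearized operator `H₊` around the nematic state `n⊗n - I/3`. -/
noncomputable def Hplus (n : Fin 3 → ℝ) (Q : Matrix (Fin 3) (Fin 3) ℝ) :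
    Matrix (Fin 3) (Fin 3) ℝ :=
  (9 : ℝ) • (Q - Matrix.vecMulVec n n * Q - Q * Matrix.vecMulVec n n +
      ((2 / 3) * frob (Matrix.vecMulVec n n) Q) • (1 : Matrix (Fin 3) (Fin 3) ℝ)) +
    (6 * frob (Matrix.vecMulVec n n) Q) •
      (Matrix.vecMulVec n n - (3 : ℝ)⁻¹ • (1 : Matrix (Fin 3) (Fin 3) ℝ))

theorem stmt10 (n : Fin 3 → ℝ) (hn : ∑ i : Fin 3, n i ^ 2 = 1)
    (Q : Matrix (Fin 3) (Fin 3) ℝ) (hsymm : Q.IsSymm) (htrace : Q.trace = 0) :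
    Hplus n Q = 0 ↔
      ∃ v : Fin 3 → ℝ, (∑ i : Fin 3, v i * n i) = 0 ∧
        Q = Matrix.vecMulVec n v + Matrix.vecMulVec v n := by
  constructor
  · intro h
    have hc : frob (Matrix.vecMulVec n n) Q = 0 := by
      have h2 := congrArg (frob (Matrix.vecMulVec n n)) h
      simp only [frob, Hplus, Matrix.trace, Matrix.diag, Matrix.mul_apply,
        Matrix.vecMulVec_apply, Matrix.add_apply, Matrix.sub_apply, Matrix.smul_apply,
        Matrix.one_apply, Fin.sum_univ_three, smul_eq_mul, Matrix.zero_apply] at h2 ⊢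
      simp only [Fin.sum_univ_three] at hn
      norm_num [Fin.ext_iff] at h2
      set c := (n 0 * n 0 * Q 0 0 + n 0 * n 1 * Q 1 0 + n 0 * n 2 * Q 2 0 +
        (n 1 * n 0 * Q 0 1 + n 1 * n 1 * Q 1 1 + n 1 * n 2 * Q 2 1) +
        (n 2 * n 0 * Q 0 2 + n 2 * n 1 * Q 1 2 + n 2 * n 2 * Q 2 2)) with hcdef
      linear_combination h2 + 2*c*(4 - 3*(n 0 ^ 2 + n 1 ^ 2 + n 2 ^ 2))*hn
    have hs : ∀ i j, Q i j = Q j i := fun i j => (hsymm.apply j i).symm ▸ rfl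
    simp only [frob, Matrix.trace, Matrix.diag, Matrix.mul_apply,
      Matrix.vecMulVec_apply, Fin.sum_univ_three] at hc
    refine ⟨fun i => Q i 0 * n 0 + Q i 1 * n 1 + Q i 2 * n 2, ?_, ?_⟩
    · simp only [Fin.sum_univ_three]
      linear_combination hc
    · ext i j
      have hE := congrFun (congrFun h i) j
      simp only [Hplus, frob, Matrix.trace, Matrix.diag, Matrix.mul_apply,
        Matrix.vecMulVec_apply, Matrix.add_apply, Matrix.sub_apply, Matrix.smul_apply,
        Fin.sum_univ_three, smul_eq_mul, Matrix.zero_apply] at hE ⊢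
      rcases eq_or_ne i j with rfl | hij
      · simp only [Matrix.one_apply_eq] at hE
        linear_combination (1/9) * hE - n i * n 0 * hs i 0 - n i * n 1 * hs i 1
          - n i * n 2 * hs i 2 - (4/9 + (2/3) * n i * n i) * hc
      · simp only [Matrix.one_apply_ne hij] at hE
        linear_combination (1/9) * hE - n i * n 0 * hs j 0 - n i * n 1 * hs j 1
          - n i * n 2 * hs j 2 - ((2/3) * n i * n j) * hc
  · rintro ⟨v, hv, rfl⟩
    simp only [Fin.sum_univ_three] at hn hv
    ext i j
    simp only [Hplus, frob, Matrix.trace, Matrix.diag, Matrix.mul_apply,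
      Matrix.vecMulVec_apply, Matrix.add_apply, Matrix.sub_apply, Matrix.smul_apply,
      Fin.sum_univ_three, smul_eq_mul, Matrix.zero_apply]
    rcases eq_or_ne i j with rfl | hij
    · simp only [Matrix.one_apply_eq]
      linear_combination (-9*(n i * v i + v i * n i) + 8*(v 0 * n 0 + v 1 * n 1 + v 2 * n 2)
          + 12*(v 0 * n 0 + v 1 * n 1 + v 2 * n 2)*(n i * n i)) * hn
        + (8 - 6 * n i * n i) * hv
    · simp only [Matrix.one_apply_ne hij]
      linear_combination (-9*(n i * v j + v i * n j)
          + 12*(v 0 * n 0 + v 1 * n 1 + v 2 * n 2)*(n i * n j)) * hn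
        + (-6 * n i * n j) * hv
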